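/- Let f : X → Y be a continuous map between locally compact Hausdorff spaces, and define φ_f : RC(Y) → powerset of RC(X) by φ_f(G) = {F ∈ CR(X) : F ⊆ f⁻¹(int G)}. Then for every G ∈ RC(Y), φ_f(G) is a δ-ideal of the local contact algebra (RC(X), ρ_X, CR(X)). -/

import Mathlib

/-! All conditions except the δ-condition are bookkeeping about compact regular closed sets.
For the δ-condition, a compact `F ⊆ f⁻¹(int G)` lies in the interior of a compact neighbourhood
`L ⊆ f⁻¹(int G)` (local compactness), and the regularization `closure (interior L)` of such an `L`
is still a compact regular closed neighbourhood of `F`. -/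

open Set

theorem closure_interior_union_of_eq {X : Type*} [TopologicalSpace X] {s t : Set X}
    (hs : closure (interior s) = s) (ht : closure (interior t) = t) :
    closure (interior (s ∪ t)) = s ∪ t := by
  have hst : IsClosed (s ∪ t) := (hs ▸ isClosed_closure).union (ht ▸ isClosed_closure)
  refine hst.closure_interior_subset.antisymm ?_
  calc s ∪ t = closure (interior s ∪ interior t) := by rw [closure_union, hs, ht]
    _ ⊆ closure (interior (s ∪ t)) := closure_mono subset_interior_union

theorem exists_compact_regularClosed_between {X : Type*} [TopologicalSpace X]
    [LocallyCompactSpace X] [RegularSpace X] {K U : Set X} (hK : IsCompact K) (hU : IsOpen U)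
    (hKU : K ⊆ U) :
    ∃ L, IsCompact L ∧ closure (interior L) = L ∧ K ⊆ interior L ∧ L ⊆ U := by
  obtain ⟨L, hLc, hLcl, hKL, hLU⟩ := exists_compact_closed_between hK hU hKU
  have hL : closure (interior L) ⊆ L := hLcl.closure_interior_subset
  exact ⟨closure (interior L), hLc.of_isClosed_subset isClosed_closure hL, closure_interior_idem,
    hKL.trans isOpen_interior.subset_interior_closure, hL.trans hLU⟩

theorem stmt_13_general {X Y : Type*} [TopologicalSpace X] [LocallyCompactSpace X] [T2Space X]
    [TopologicalSpace Y]
    (f : X → Y) (hf : Continuous f)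
    (G : Set Y) :
    -- φ_f(G) = {F | F ∈ CR(X) ∧ F ⊆ f⁻¹(int G)}
    -- contains ∅,
    ((∅ : Set X) ∈ {F : Set X | (closure (interior F) = F ∧ IsCompact F) ∧
        F ⊆ f ⁻¹' (interior G)}) ∧
    -- is downward closed within RC(X),
    (∀ F F' : Set X, closure (interior F) = F → F ⊆ F' →
      F' ∈ {F : Set X | (closure (interior F) = F ∧ IsCompact F) ∧
        F ⊆ f ⁻¹' (interior G)} →
      F ∈ {F : Set X | (closure (interior F) = F ∧ IsCompact F) ∧
        F ⊆ f ⁻¹' (interior G)}) ∧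
    -- is closed under binary unions,
    (∀ F F' : Set X,
      F ∈ {F : Set X | (closure (interior F) = F ∧ IsCompact F) ∧
        F ⊆ f ⁻¹' (interior G)} →
      F' ∈ {F : Set X | (closure (interior F) = F ∧ IsCompact F) ∧
        F ⊆ f ⁻¹' (interior G)} →
      F ∪ F' ∈ {F : Set X | (closure (interior F) = F ∧ IsCompact F) ∧
        F ⊆ f ⁻¹' (interior G)}) ∧
    -- is contained in CR(X),
    ({F : Set X | (closure (interior F) = F ∧ IsCompact F) ∧
        F ⊆ f ⁻¹' (interior G)} ⊆
      {F : Set X | closure (interior F) = F ∧ IsCompact F}) ∧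
    -- and satisfies the δ-condition.
    (∀ F ∈ {F : Set X | (closure (interior F) = F ∧ IsCompact F) ∧
        F ⊆ f ⁻¹' (interior G)},
      ∃ F' ∈ {F : Set X | (closure (interior F) = F ∧ IsCompact F) ∧
        F ⊆ f ⁻¹' (interior G)}, F ⊆ interior F') := by
  refine ⟨⟨⟨by simp, isCompact_empty⟩, empty_subset _⟩, ?_, ?_, fun F hF => hF.1, ?_⟩
  · rintro F F' hF hFF' ⟨⟨-, hF'c⟩, hF'U⟩
    exact ⟨⟨hF, hF'c.of_isClosed_subset (hF ▸ isClosed_closure) hFF'⟩, hFF'.trans hF'U⟩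
  · rintro F F' ⟨⟨hFr, hFc⟩, hFU⟩ ⟨⟨hF'r, hF'c⟩, hF'U⟩
    exact ⟨⟨closure_interior_union_of_eq hFr hF'r, hFc.union hF'c⟩, union_subset hFU hF'U⟩
  · rintro F ⟨⟨-, hFc⟩, hFU⟩
    obtain ⟨L, hLc, hLr, hFL, hLU⟩ :=
      exists_compact_regularClosed_between hFc (isOpen_interior.preimage hf) hFU
    exact ⟨L, ⟨⟨hLr, hLc⟩, hLU⟩, hFL⟩

/-- For a continuous map f : X → Y between locally compact Hausdorff spaces and
G ∈ RC(Y), the set φ_f(G) = {F ∈ CR(X) : F ⊆ f⁻¹(int G)} is a δ-ideal of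
(RC(X), ρ_X, CR(X)). -/
theorem stmt_13 {X Y : Type*} [TopologicalSpace X] [LocallyCompactSpace X] [T2Space X]
    [TopologicalSpace Y] [LocallyCompactSpace Y] [T2Space Y]
    (f : X → Y) (hf : Continuous f)
    (G : Set Y) (hG : closure (interior G) = G) :
    -- φ_f(G) = {F | F ∈ CR(X) ∧ F ⊆ f⁻¹(int G)}
    -- contains ∅,
    ((∅ : Set X) ∈ {F : Set X | (closure (interior F) = F ∧ IsCompact F) ∧
        F ⊆ f ⁻¹' (interior G)}) ∧
    -- is downward closed within RC(X),
    (∀ F F' : Set X, closure (interior F) = F → F ⊆ F' →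
      F' ∈ {F : Set X | (closure (interior F) = F ∧ IsCompact F) ∧
        F ⊆ f ⁻¹' (interior G)} →
      F ∈ {F : Set X | (closure (interior F) = F ∧ IsCompact F) ∧
        F ⊆ f ⁻¹' (interior G)}) ∧
    -- is closed under binary unions,
    (∀ F F' : Set X,
      F ∈ {F : Set X | (closure (interior F) = F ∧ IsCompact F) ∧
        F ⊆ f ⁻¹' (interior G)} →
      F' ∈ {F : Set X | (closure (interior F) = F ∧ IsCompact F) ∧
        F ⊆ f ⁻¹' (interior G)} →
      F ∪ F' ∈ {F : Set X | (closure (interior F) = F ∧ IsCompact F) ∧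
        F ⊆ f ⁻¹' (interior G)}) ∧
    -- is contained in CR(X),
    ({F : Set X | (closure (interior F) = F ∧ IsCompact F) ∧
        F ⊆ f ⁻¹' (interior G)} ⊆
      {F : Set X | closure (interior F) = F ∧ IsCompact F}) ∧
    -- and satisfies the δ-condition.
    (∀ F ∈ {F : Set X | (closure (interior F) = F ∧ IsCompact F) ∧
        F ⊆ f ⁻¹' (interior G)},
      ∃ F' ∈ {F : Set X | (closure (interior F) = F ∧ IsCompact F) ∧
        F ⊆ f ⁻¹' (interior G)}, F ⊆ interior F') :=
  stmt_13_general f hf G
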